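/- arXiv:math/0602191 — 2 statements merged into one kernel-verified Lean document; each statement's English description precedes it below -/
import Mathlib

section
/- Let d ≥ 1, and let n and m be integers with C(d,2) ≤ m ≤ d·n − C(d+1,2) such that m mod d = 0 if d is odd, and m mod d = d/2 if d is even. Then there exists a d-degenerate finite simple graph G with n vertices and m edges such that c(G) = n + (2^d − 1)·m/d − ((d − 3)·2^d + d + 1)/2. -/
/-!
Order the vertices and let `N⁻(v)` be the set of neighbours of `v` preceding it. The graph is
`max |N⁻(v)|`-degenerate (the largest vertex of a set has all its neighbours in the set inside
`N⁻(v)`) and has `∑ |N⁻(v)|` edges; if every `N⁻(v)` is a clique, it has `1 + ∑ 2 ^ |N⁻(v)|`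
cliques (a nonempty clique is its largest vertex `v` together with any subset of `N⁻(v)`).
The complete split graph `K_d ∨ \overline{K_k}` followed by `r` isolated vertices has
`|N⁻(v)| = 0, 1, …, d - 1`, then `d` for `k` vertices, then `0` for `r` vertices, hence
`C(d,2) + dk` edges and `2^d (k + 1) + r` cliques. The congruence condition says exactly
`m ≡ C(d,2) (mod d)`, so `m = C(d,2) + dk`, and since `C(d,2) + C(d+1,2) = d²` the upper bound
on `m` says `d + k ≤ n`.
-/

/-- The number of cliques (sets of pairwise adjacent vertices, including the
empty clique) of a graph. -/
noncomputable def cliqueCount {V : Type*} (G : SimpleGraph V) : ℕ :=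
  Nat.card {s : Finset V // G.IsClique (s : Set V)}

/-- A graph is `d`-degenerate if every nonempty set of vertices contains a
vertex with at most `d` neighbours in that set. -/
def IsDegenerate {V : Type*} (G : SimpleGraph V) (d : ℕ) : Prop :=
  ∀ S : Finset V, S.Nonempty → ∃ v ∈ S, Nat.card {u ∈ (S : Set V) | G.Adj v u} ≤ d

open Finset SimpleGraph

namespace SimpleGraph

section LowerNeighbors

variable {V : Type*} [Fintype V] [LinearOrder V] (G : SimpleGraph V) [DecidableRel G.Adj]

def lowerNeighborFinset (v : V) : Finset V := univ.filter fun u => u < v ∧ G.Adj v u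

variable {G}

@[simp]
theorem mem_lowerNeighborFinset {u v : V} : u ∈ G.lowerNeighborFinset v ↔ u < v ∧ G.Adj v u := by
  simp [lowerNeighborFinset]

theorem isDegenerate_of_card_lowerNeighborFinset_le {d : ℕ}
    (h : ∀ v, #(G.lowerNeighborFinset v) ≤ d) : IsDegenerate G d := by
  intro S hS
  refine ⟨S.max' hS, S.max'_mem hS, ?_⟩
  have hsub : {u ∈ (S : Set V) | G.Adj (S.max' hS) u} ⊆ G.lowerNeighborFinset (S.max' hS) := by
    rintro u ⟨huS, hadj⟩
    exact mem_lowerNeighborFinset.2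
      ⟨lt_of_le_of_ne (S.le_max' u huS) (G.ne_of_adj hadj).symm, hadj⟩
  rw [Nat.card_coe_set_eq]
  exact ((Set.ncard_le_ncard hsub (finite_toSet _)).trans_eq (Set.ncard_coe_finset _)).trans (h _)

theorem card_edgeFinset_eq_sum_card_lowerNeighborFinset :
    #G.edgeFinset = ∑ v, #(G.lowerNeighborFinset v) := by
  rw [← card_sigma]
  symm
  refine card_bij (fun p _ => s(p.1, p.2)) ?_ ?_ ?_
  · rintro ⟨v, u⟩ h
    simp only [mem_sigma, mem_univ, mem_lowerNeighborFinset, true_and] at h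
    simpa using h.2
  · rintro ⟨v, u⟩ h ⟨v', u'⟩ h' he
    simp only [mem_sigma, mem_univ, mem_lowerNeighborFinset, true_and] at h h'
    rcases Sym2.eq_iff.1 he with ⟨rfl, rfl⟩ | ⟨rfl, rfl⟩
    · rfl
    · exact absurd (h.1.trans h'.1) (lt_irrefl _)
  · intro e he
    induction e using Sym2.ind with
    | h a b =>
      have hab : G.Adj a b := by simpa using he
      rcases hab.ne.lt_or_gt with hlt | hlt
      · exact ⟨⟨b, a⟩, by simpa using ⟨hlt, hab.symm⟩, Sym2.eq_swap⟩
      · exact ⟨⟨a, b⟩, by simpa using ⟨hlt, hab⟩, rfl⟩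

theorem cliqueCount_eq_one_add_sum_two_pow
    (h : ∀ v, G.IsClique (G.lowerNeighborFinset v : Set V)) :
    cliqueCount G = 1 + ∑ v, 2 ^ #(G.lowerNeighborFinset v) := by
  have hlt : ∀ {v t}, t ⊆ G.lowerNeighborFinset v → ∀ u ∈ t, u < v :=
    fun ht u hu => (mem_lowerNeighborFinset.1 (ht hu)).1
  have hcliques : (univ.filter fun s : Finset V => G.IsClique (s : Set V)) =
      insert ∅ ((univ.sigma fun v => (G.lowerNeighborFinset v).powerset).image
        fun p => insert p.1 p.2) := by
    ext s
    simp only [mem_filter, mem_univ, true_and, mem_insert, mem_image, mem_sigma, mem_powerset]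
    constructor
    · intro hs
      rcases s.eq_empty_or_nonempty with rfl | hne
      · exact .inl rfl
      refine .inr ⟨⟨s.max' hne, s.erase (s.max' hne)⟩, fun u hu => ?_,
        insert_erase (s.max'_mem hne)⟩
      obtain ⟨hne', hu⟩ := mem_erase.1 hu
      exact mem_lowerNeighborFinset.2 ⟨lt_of_le_of_ne (s.le_max' u hu) hne',
        hs (s.max'_mem hne) hu hne'.symm⟩
    · rintro (rfl | ⟨⟨v, t⟩, ht, rfl⟩)
      · simp
      rw [coe_insert]
      exact ((h v).subset ht).insert fun u hu _ => (mem_lowerNeighborFinset.1 (ht hu)).2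
  have hinj : Set.InjOn (fun p : (_ : V) × Finset V => insert p.1 p.2)
      (univ.sigma fun v => (G.lowerNeighborFinset v).powerset) := by
    rintro ⟨v, t⟩ hvt ⟨v', t'⟩ hvt' he
    simp only [mem_coe, mem_sigma, mem_univ, mem_powerset, true_and] at hvt hvt' he
    have hle : ∀ {v t w}, t ⊆ G.lowerNeighborFinset v → w ∈ insert v t → w ≤ v :=
      fun ht hw => (mem_insert.1 hw).elim le_of_eq fun hw => (hlt ht _ hw).le
    have hv : v = v' :=
      le_antisymm (hle hvt' (he ▸ mem_insert_self v t)) (hle hvt (he ▸ mem_insert_self v' t'))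
    subst hv
    have hv : v ∉ t := fun hv => lt_irrefl _ (hlt hvt _ hv)
    have hv' : v ∉ t' := fun hv => lt_irrefl _ (hlt hvt' _ hv)
    rw [← erase_insert hv, ← erase_insert hv', he]
  rw [cliqueCount, Nat.card_eq_fintype_card, Fintype.card_subtype, hcliques,
    card_insert_of_notMem, card_image_of_injOn hinj, card_sigma, add_comm]
  · simp only [card_powerset]
  · simp

end LowerNeighbors

/-- The complete split graph `K_d ∨ \overline{K_k}` on the first `d + k` vertices, with the last
`r` vertices isolated. -/
def completeSplitGraph (d k r : ℕ) : SimpleGraph (Fin (d + k + r)) :=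
  fromRel fun u v => u < v ∧ (u : ℕ) < d ∧ (v : ℕ) < d + k

instance (d k r : ℕ) : DecidableRel (completeSplitGraph d k r).Adj := fun u v =>
  decidable_of_iff' _ (fromRel_adj _ u v)

variable {d k r : ℕ}

theorem lowerNeighborFinset_completeSplitGraph (v : Fin (d + k + r)) :
    (completeSplitGraph d k r).lowerNeighborFinset v =
      univ.filter fun u : Fin (d + k + r) =>
        (u : ℕ) < if (v : ℕ) < d + k then min (v : ℕ) d else 0 := by
  ext u
  simp only [mem_lowerNeighborFinset, completeSplitGraph, fromRel_adj, mem_filter, mem_univ,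
    true_and, Fin.lt_def, ne_eq, Fin.ext_iff]
  split_ifs <;> omega

theorem isClique_lowerNeighborFinset_completeSplitGraph (v : Fin (d + k + r)) :
    (completeSplitGraph d k r).IsClique
      ((completeSplitGraph d k r).lowerNeighborFinset v : Set (Fin (d + k + r))) := by
  intro u hu w hw huw
  simp only [lowerNeighborFinset_completeSplitGraph, coe_filter, mem_univ, true_and,
    Set.mem_ofPred_eq] at hu hw
  simp only [completeSplitGraph, fromRel_adj, Fin.lt_def, Fin.ext_iff, ne_eq] at huw ⊢
  split_ifs at hu hw <;> omega

theorem sum_lowerNeighborFinset_completeSplitGraph (f : ℕ → ℕ) :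
    ∑ v, f #((completeSplitGraph d k r).lowerNeighborFinset v) =
      ∑ i ∈ range d, f i + k * f d + r * f 0 := by
  simp only [lowerNeighborFinset_completeSplitGraph, Fin.card_filter_val_lt]
  rw [Fin.sum_univ_eq_sum_range (fun i => f (min (d + k + r) (if i < d + k then min i d else 0))),
    sum_range_add, sum_range_add]
  congr 2
  · exact sum_congr rfl fun i hi => by have := mem_range.1 hi; congr 1; split_ifs <;> omega
  · rw [sum_const_nat (m := f d) fun i hi => by
      have := mem_range.1 hi; congr 1; split_ifs <;> omega, card_range]
  · rw [sum_const_nat (m := f 0) fun i hi => by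
      have := mem_range.1 hi; congr 1; split_ifs <;> omega, card_range]

theorem isDegenerate_completeSplitGraph : IsDegenerate (completeSplitGraph d k r) d :=
  isDegenerate_of_card_lowerNeighborFinset_le fun v => by
    rw [lowerNeighborFinset_completeSplitGraph, Fin.card_filter_val_lt]
    split_ifs <;> omega

theorem card_edgeSet_completeSplitGraph :
    Nat.card (completeSplitGraph d k r).edgeSet = d.choose 2 + d * k := by
  rw [Nat.card_eq_fintype_card, ← edgeFinset_card, card_edgeFinset_eq_sum_card_lowerNeighborFinset]
  simpa [sum_range_id, Nat.choose_two_right, mul_comm] using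
    sum_lowerNeighborFinset_completeSplitGraph (d := d) (k := k) (r := r) id

theorem cliqueCount_completeSplitGraph :
    cliqueCount (completeSplitGraph d k r) = 2 ^ d * (k + 1) + r := by
  rw [cliqueCount_eq_one_add_sum_two_pow isClique_lowerNeighborFinset_completeSplitGraph,
    sum_lowerNeighborFinset_completeSplitGraph (2 ^ ·), Nat.geomSum_eq le_rfl]
  have := Nat.one_le_two_pow (n := d)
  simp only [Nat.add_one_sub_one, Nat.div_one, pow_zero, mul_one]
  ring_nf
  omega

end SimpleGraph

theorem Nat.choose_two_mod_self (d : ℕ) : d.choose 2 % d = if Odd d then 0 else d / 2 := by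
  obtain ⟨e, rfl | rfl⟩ := d.even_or_odd'
  · rw [if_neg (Nat.not_odd_iff_even.2 (even_two_mul e))]
    rcases e with _ | e
    · rfl
    have h : (2 * (e + 1)).choose 2 = 2 * (e + 1) * e + (e + 1) := by
      have h : ((2 * (e + 1)).choose 2 : ℚ) = 2 * (e + 1) * e + (e + 1) := by
        push_cast [Nat.cast_choose_two]
        ring
      exact_mod_cast h
    rw [h, Nat.mul_add_mod, Nat.mod_eq_of_lt (by omega)]
    omega
  · have h : (2 * e + 1).choose 2 = (2 * e + 1) * e := by
      rw [Nat.choose_two_right, Nat.add_sub_cancel, mul_comm 2 e, ← mul_assoc,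
        Nat.mul_div_cancel _ two_pos]
    rw [if_pos (odd_two_mul_add_one e), h, Nat.mul_mod_right]

theorem Nat.choose_two_add_choose_two_succ (d : ℕ) : d.choose 2 + (d + 1).choose 2 = d * d := by
  have h : ((d.choose 2 + (d + 1).choose 2 : ℕ) : ℚ) = (d * d : ℕ) := by
    push_cast [Nat.cast_choose_two]
    ring
  exact_mod_cast h

theorem Nat.exists_eq_choose_two_add_mul {d m : ℕ} (hm : d.choose 2 ≤ m)
    (hmod : if Odd d then m % d = 0 else m % d = d / 2) : ∃ k, m = d.choose 2 + d * k := by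
  have hmodeq : d.choose 2 ≡ m [MOD d] := by
    rw [Nat.ModEq, Nat.choose_two_mod_self]
    split_ifs at hmod ⊢ <;> exact hmod.symm
  obtain ⟨k, hk⟩ := (Nat.modEq_iff_dvd' hm).1 hmodeq
  exact ⟨k, by omega⟩

/-- For all `d ≥ 1` and `C(d,2) ≤ m ≤ dn - C(d+1,2)` with `m ≡ 0 (mod d)` when
`d` is odd and `m ≡ d/2 (mod d)` when `d` is even, there is a `d`-degenerate
graph with `n` vertices, `m` edges, and exactly
`n + (2^d - 1)·m/d - ((d - 3)·2^d + d + 1)/2` cliques. -/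
theorem clique_count_degenerate_edges_exists (d n m : ℕ) (hd : 1 ≤ d)
    (hm₁ : d.choose 2 ≤ m) (hm₂ : m + (d + 1).choose 2 ≤ d * n)
    (hmod : if Odd d then m % d = 0 else m % d = d / 2) :
    ∃ G : SimpleGraph (Fin n), IsDegenerate G d ∧ Nat.card G.edgeSet = m ∧
      (cliqueCount G : ℝ) = n + (2 ^ d - 1) * m / d -
        (((d : ℝ) - 3) * 2 ^ d + d + 1) / 2 := by
  obtain ⟨k, rfl⟩ := Nat.exists_eq_choose_two_add_mul hm₁ hmod
  have hkn : d + k ≤ n := by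
    refine Nat.le_of_mul_le_mul_left ?_ hd
    linarith [Nat.choose_two_add_choose_two_succ d]
  obtain ⟨r, rfl⟩ := Nat.exists_eq_add_of_le hkn
  refine ⟨completeSplitGraph d k r, isDegenerate_completeSplitGraph,
    card_edgeSet_completeSplitGraph, ?_⟩
  have hd₀ : (d : ℝ) ≠ 0 := Nat.cast_ne_zero.2 (by omega)
  rw [cliqueCount_completeSplitGraph]
  push_cast [Nat.cast_choose_two]
  field_simp
  ring
end

section
/- Let k ≥ 1 be an integer. Every finite simple graph G with n vertices containing no clique of cardinality k + 1 has at most (n/k + 1)^k cliques; that is, c(G) ≤ (n/k + 1)^k as real numbers, equivalently k^k·c(G) ≤ (n + k)^k. -/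
/-!
The cliques inside a vertex set `s` are those avoiding a vertex `v ∈ s` and those containing it;
the latter correspond to the cliques of the neighbourhood of `v` in `s`, which is `K_k`-free when
`s` is `K_{k+1}`-free. If `|s| = n + 1`, building a clique greedily shows that some vertex has at
most `n - ⌊n/k⌋` neighbours in `s`; splitting at that vertex reproduces the recursion satisfied by
the clique count `∏ (aᵢ + 1)` of the Turán graph `T(n, k)` with part sizes `aᵢ`. So no
`K_{k+1}`-free graph has more cliques than `T(n, k)`, and by AM-GM
`k^k ∏ (aᵢ + 1) ≤ (∑ (aᵢ + 1))^k = (n + k)^k`.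
-/

open Finset

lemma Nat.div_eq_add_one_div_add_one {a k : ℕ} (h : a < 2 * k) : a / k = (a + 1) / (k + 1) := by
  rcases lt_or_ge a k with ha | ha
  · rw [Nat.div_eq_of_lt ha, Nat.div_eq_of_lt (by omega)]
  · rw [Nat.div_eq_of_lt_le (k := 1) (by omega) (by omega),
      Nat.div_eq_of_lt_le (k := 1) (by omega) (by omega)]

lemma Nat.add_one_add_div_add_one (n k : ℕ) : (n + 1 + k) / (k + 1) = n / (k + 1) + 1 := by
  rw [add_assoc, add_comm 1 k, Nat.add_div_right n k.succ_pos]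

/-- Removing a smallest part, of size `n / (k + 1)`, from the balanced partition of `n` into
`k + 1` parts leaves the balanced partition of `n - n / (k + 1)` into `k` parts. -/
lemma Nat.sub_div_add_one_add_div (n k : ℕ) {i : ℕ} (hi : i < k) :
    (n - n / (k + 1) + i) / k = (n + 1 + i) / (k + 1) := by
  have hn := Nat.div_add_mod n (k + 1)
  have hr := Nat.mod_lt n k.succ_pos
  set q := n / (k + 1)
  set r := n % (k + 1)
  have h₁ : n - q + i = k * q + (r + i) := by rw [← hn]; ring_nf; omega
  have h₂ : n + 1 + i = (k + 1) * q + (r + i + 1) := by rw [← hn]; ring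
  rw [h₁, h₂, Nat.mul_add_div (by omega), Nat.mul_add_div k.succ_pos,
    Nat.div_eq_add_one_div_add_one (by omega)]

lemma Nat.sum_range_add_div (n k : ℕ) : ∑ i ∈ range (k + 1), (n + i) / (k + 1) = n := by
  induction n with
  | zero => exact sum_eq_zero fun i hi => by rw [zero_add, Nat.div_eq_of_lt (mem_range.mp hi)]
  | succ n ih =>
    have hfirst : ∑ i ∈ range (k + 1), (n + i) / (k + 1) =
        ∑ i ∈ range k, (n + 1 + i) / (k + 1) + n / (k + 1) := by
      rw [sum_range_succ', add_zero]
      congr 1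
      exact sum_congr rfl fun i _ => by ring_nf
    rw [sum_range_succ, Nat.add_one_add_div_add_one]
    omega

lemma Real.pow_card_mul_prod_le_sum_pow {ι : Type*} (s : Finset ι) (f : ι → ℝ)
    (hf : ∀ i ∈ s, 0 ≤ f i) : (#s : ℝ) ^ #s * ∏ i ∈ s, f i ≤ (∑ i ∈ s, f i) ^ #s := by
  rcases s.eq_empty_or_nonempty with rfl | hs
  · simp
  have hcard : (0 : ℝ) < #s := by exact_mod_cast hs.card_pos
  have amgm := Real.geom_mean_le_arith_mean_weighted s (fun _ => (#s : ℝ)⁻¹) f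
    (fun _ _ => by positivity) (by simp [hcard.ne']) hf
  rw [Real.finsetProd_rpow s f hf, ← mul_sum] at amgm
  have := pow_le_pow_left₀ (Real.rpow_nonneg (prod_nonneg hf) _) amgm #s
  rw [Real.rpow_inv_natCast_pow (prod_nonneg hf) hs.card_pos.ne', mul_pow, inv_pow] at this
  exact (le_inv_mul_iff₀ (by positivity)).mp this

/-- `(n + i) / k` for `i < k` are the part sizes of the balanced partition of `n` into `k` parts,
so this is the number of cliques of the Turán graph `T(n, k)`. -/
def turanCliqueCount (k n : ℕ) : ℕ := ∏ i ∈ range k, ((n + i) / k + 1)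

lemma turanCliqueCount_zero_right (k : ℕ) : turanCliqueCount k 0 = 1 :=
  prod_eq_one fun i hi => by rw [zero_add, Nat.div_eq_of_lt (mem_range.mp hi)]; rfl

lemma turanCliqueCount_mono (k : ℕ) : Monotone (turanCliqueCount k) := fun _ _ h =>
  prod_le_prod' fun _ _ => by gcongr

lemma turanCliqueCount_succ_succ (k n : ℕ) :
    turanCliqueCount (k + 1) (n + 1) =
      turanCliqueCount (k + 1) n + turanCliqueCount k (n - n / (k + 1)) := by
  have hshift : turanCliqueCount k (n - n / (k + 1)) =
      ∏ i ∈ range k, ((n + (i + 1)) / (k + 1) + 1) :=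
    prod_congr rfl fun i hi => by
      rw [Nat.sub_div_add_one_add_div n k (mem_range.mp hi), add_assoc, add_comm 1 i]
  unfold turanCliqueCount at *
  rw [prod_range_succ (fun i => (n + 1 + i) / (k + 1) + 1),
    prod_range_succ' (fun i => (n + i) / (k + 1) + 1), hshift, add_zero,
    Nat.add_one_add_div_add_one]
  simp only [add_assoc, add_comm 1]
  ring

lemma pow_mul_turanCliqueCount_le (k n : ℕ) : k ^ k * turanCliqueCount k n ≤ (n + k) ^ k := by
  rcases k with _ | k
  · simp [turanCliqueCount]
  have hsum : ∑ i ∈ range (k + 1), ((n + i) / (k + 1) + 1) = n + (k + 1) := by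
    rw [sum_add_distrib, Nat.sum_range_add_div, sum_const, card_range, smul_eq_mul, mul_one]
  have := Real.pow_card_mul_prod_le_sum_pow (range (k + 1))
    (fun i => (((n + i) / (k + 1) + 1 : ℕ) : ℝ)) (fun _ _ => by positivity)
  rw [card_range, ← Nat.cast_prod, ← Nat.cast_sum, hsum] at this
  exact_mod_cast this

namespace SimpleGraph

variable {V : Type*} [DecidableEq V] (G : SimpleGraph V) [DecidableRel G.Adj]

def cliquesIn (s : Finset V) : Finset (Finset V) := {t ∈ s.powerset | G.IsClique (t : Set V)}

variable {G}

@[simp]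
lemma mem_cliquesIn {s t : Finset V} : t ∈ G.cliquesIn s ↔ t ⊆ s ∧ G.IsClique (t : Set V) := by
  simp [cliquesIn]

lemma cliquesIn_empty : G.cliquesIn ∅ = {∅} := by
  ext t
  simp +contextual [subset_empty]

lemma card_cliquesIn_eq_add {s : Finset V} {v : V} (hv : v ∈ s) :
    #(G.cliquesIn s) = #(G.cliquesIn (s.erase v)) + #(G.cliquesIn {u ∈ s | G.Adj v u}) := by
  have hsplit : G.cliquesIn s =
      G.cliquesIn (s.erase v) ∪ (G.cliquesIn {u ∈ s | G.Adj v u}).image (insert v) := by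
    ext t
    simp only [mem_union, mem_image, mem_cliquesIn, subset_erase]
    constructor
    · rintro ⟨hts, ht⟩
      by_cases hvt : v ∈ t
      · refine Or.inr ⟨t.erase v, ⟨fun u hu => ?_, ht.subset (by simp)⟩, insert_erase hvt⟩
        obtain ⟨huv, hu⟩ := mem_erase.mp hu
        exact mem_filter.mpr ⟨hts hu, ht hvt hu huv.symm⟩
      · exact Or.inl ⟨⟨hts, hvt⟩, ht⟩
    · rintro (⟨⟨hts, -⟩, ht⟩ | ⟨u, ⟨hus, hu⟩, rfl⟩)
      · exact ⟨hts, ht⟩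
      · refine ⟨insert_subset hv fun w hw => (mem_filter.mp (hus hw)).1, ?_⟩
        rw [coe_insert, isClique_insert]
        exact ⟨hu, fun w hw _ => (mem_filter.mp (hus hw)).2⟩
  have hdisj : Disjoint (G.cliquesIn (s.erase v))
      ((G.cliquesIn {u ∈ s | G.Adj v u}).image (insert v)) := by
    simp only [Finset.disjoint_left, mem_image, mem_cliquesIn, subset_erase, not_exists, not_and]
    rintro t ⟨⟨-, hvt⟩, -⟩ u - rfl
    exact hvt (mem_insert_self v u)
  have hinj : Set.InjOn (insert v) (G.cliquesIn {u ∈ s | G.Adj v u} : Set (Finset V)) := by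
    intro t ht u hu htu
    have hvN : v ∉ ({u ∈ s | G.Adj v u} : Finset V) := fun h => G.irrefl (mem_filter.mp h).2
    have hvt : v ∉ t := fun h => hvN ((mem_cliquesIn.mp ht).1 h)
    have hvu : v ∉ u := fun h => hvN ((mem_cliquesIn.mp hu).1 h)
    rw [← erase_insert hvt, ← erase_insert hvu, htu]
  rw [hsplit, card_union_of_disjoint hdisj, card_image_of_injOn hinj]

lemma exists_isNClique_of_card_nonadj_le {s : Finset V} {M : ℕ}
    (hM : ∀ v ∈ s, #{u ∈ s | ¬G.Adj v u} ≤ M) :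
    ∀ {j : ℕ}, j * M < #s → ∃ t ⊆ s, G.IsNClique (j + 1) t
  | 0, hs => by
    obtain ⟨v, hv⟩ := card_pos.mp (by omega : 0 < #s)
    exact ⟨{v}, singleton_subset_iff.mpr hv, isNClique_singleton.mpr rfl⟩
  | j + 1, hs => by
    obtain ⟨t, hts, ht⟩ := exists_isNClique_of_card_nonadj_le hM
      (lt_of_le_of_lt (Nat.mul_le_mul_right M j.le_succ) hs)
    have hcommon : ∃ u ∈ s, ∀ x ∈ t, G.Adj x u := by
      by_contra! h
      have hcover : s ⊆ t.biUnion fun x => {u ∈ s | ¬G.Adj x u} := fun u hu => by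
        obtain ⟨x, hx, hxu⟩ := h u hu
        exact mem_biUnion.mpr ⟨x, hx, mem_filter.mpr ⟨hu, hxu⟩⟩
      have := (card_le_card hcover).trans
        (card_biUnion_le.trans (sum_le_card_nsmul t _ M fun x hx => hM x (hts hx)))
      rw [smul_eq_mul, ht.card_eq] at this
      omega
    obtain ⟨u, hus, hu⟩ := hcommon
    have hut : u ∉ t := fun h => G.irrefl (hu u h)
    refine ⟨insert u t, insert_subset hus hts, ?_⟩
    rw [isNClique_iff, coe_insert, card_insert_of_notMem hut, ht.card_eq, isClique_insert]
    exact ⟨⟨ht.isClique, fun x hx _ => (hu x hx).symm⟩, rfl⟩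

lemma exists_card_adj_le_of_cliqueFreeOn {s : Finset V} {k n : ℕ}
    (hs : G.CliqueFreeOn s (k + 2)) (hcard : #s = n + 1) :
    ∃ v ∈ s, #{u ∈ s | G.Adj v u} ≤ n - n / (k + 1) := by
  by_contra! h
  have hM : ∀ v ∈ s, #{u ∈ s | ¬G.Adj v u} ≤ n / (k + 1) := fun v hv => by
    have : #{u ∈ s | G.Adj v u} + #{u ∈ s | ¬G.Adj v u} = #s :=
      card_filter_add_card_filter_not _
    have := h v hv
    have := Nat.sub_add_cancel (Nat.div_le_self n (k + 1))
    omega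
  obtain ⟨t, hts, ht⟩ := exists_isNClique_of_card_nonadj_le hM
    (j := k + 1) (by have := Nat.mul_div_le n (k + 1); omega)
  exact hs (coe_subset.mpr hts) ht

theorem card_cliquesIn_le_turanCliqueCount {s : Finset V} {k : ℕ}
    (hs : G.CliqueFreeOn s (k + 1)) : #(G.cliquesIn s) ≤ turanCliqueCount k #s := by
  induction s using Finset.strongInduction generalizing k with
  | H s ih =>
  rcases s.eq_empty_or_nonempty with rfl | ⟨w, hw⟩
  · simp [cliquesIn_empty, turanCliqueCount_zero_right]
  obtain ⟨n, hn⟩ := Nat.exists_eq_add_one_of_ne_zero (card_ne_zero_of_mem hw)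
  rcases k with _ | k
  · exact absurd (CliqueFreeOn.subset G (Set.singleton_subset_iff.mpr hw) hs) (by simp)
  obtain ⟨v, hv, hdeg⟩ := exists_card_adj_le_of_cliqueFreeOn hs hn
  have herase := ih _ (erase_ssubset hv) (CliqueFreeOn.subset G (by simp) hs)
  have hnbrs := ih {u ∈ s | G.Adj v u} (filter_ssubset.mpr ⟨v, hv, G.irrefl⟩)
    (CliqueFreeOn.subset G (fun u hu => by simpa using hu) (CliqueFreeOn.of_succ G hs hv))
  rw [card_erase_of_mem hv, hn, add_tsub_cancel_right] at herase
  calc #(G.cliquesIn s)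
      = #(G.cliquesIn (s.erase v)) + #(G.cliquesIn {u ∈ s | G.Adj v u}) :=
        card_cliquesIn_eq_add hv
    _ ≤ turanCliqueCount (k + 1) n + turanCliqueCount k (n - n / (k + 1)) :=
        add_le_add herase (hnbrs.trans (turanCliqueCount_mono k hdeg))
    _ = turanCliqueCount (k + 1) #s := by rw [hn, turanCliqueCount_succ_succ]

lemma card_cliquesIn_univ [Fintype V] : #(G.cliquesIn univ) = cliqueCount G := by
  rw [cliqueCount, Nat.card_eq_fintype_card, Fintype.card_subtype]
  simp [cliquesIn]

end SimpleGraph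

theorem clique_count_clique_free_general {V : Type*} [Fintype V] (G : SimpleGraph V)
    (k : ℕ) (hfree : G.CliqueFree (k + 1)) :
    k ^ k * cliqueCount G ≤ (Fintype.card V + k) ^ k := by
  classical
  calc k ^ k * cliqueCount G ≤ k ^ k * turanCliqueCount k (Fintype.card V) := by
        rw [← G.card_cliquesIn_univ, ← card_univ]
        gcongr
        exact G.card_cliquesIn_le_turanCliqueCount hfree.cliqueFreeOn
    _ ≤ (Fintype.card V + k) ^ k := pow_mul_turanCliqueCount_le k _

/-- Every graph with `n` vertices and no clique of cardinality `k + 1`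
(where `k ≥ 1`) has at most `(n/k + 1)^k` cliques. -/
theorem clique_count_clique_free {V : Type*} [Fintype V] (G : SimpleGraph V)
    (k : ℕ) (hk : 1 ≤ k) (hfree : G.CliqueFree (k + 1)) :
    k ^ k * cliqueCount G ≤ (Fintype.card V + k) ^ k :=
  clique_count_clique_free_general G k hfree
end
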